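/- Let N ≥ 5 and h_Q(m) = ((m + N - 3)·…·(m+1)/(N-2)!)·(2m + N - 2). For integers 0 < s < t ≤ m/2, one has h_Q(t) + h_Q(m - t) < h_Q(s) + h_Q(m - s). -/

import Mathlib

/-!
Up to the factor `1 / (N - 2)!`, `h_Q` is a polynomial with nonnegative coefficients and degree
`N - 2 ≥ 2`. For `x ↦ x ^ k` on `[0, ∞)`, pulling a pair of points towards each other while keeping
their sum fixed never increases `x ^ k + y ^ k`, and strictly decreases it once `k ≥ 2`; here the
pair `(s, m - s)` is pulled to `(t, m - t)`. Summing over the monomials gives the claim.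
-/

open Polynomial Finset

section PowerSums

variable {R : Type*} [CommRing R] [LinearOrder R] [IsStrictOrderedRing R] {a a' b b' : R}

theorem pow_add_pow_lt_pow_add_pow_of_add_eq (ha : 0 ≤ a) (haa' : a < a') (ha'b' : a' ≤ b')
    (hsum : a + b = a' + b') {k : ℕ} (hk : 2 ≤ k) : a' ^ k + b' ^ k < a ^ k + b ^ k := by
  have ha' : 0 ≤ a' := ha.trans haa'.le
  have ha'b : a' < b := by linarith
  have hsums :
      ∑ i ∈ range k, a' ^ i * a ^ (k - 1 - i) < ∑ i ∈ range k, b ^ i * b' ^ (k - 1 - i) := by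
    refine sum_lt_sum (fun i _ => ?_) ⟨k - 1, mem_range.2 (by omega), ?_⟩
    · exact mul_le_mul (pow_le_pow_left₀ ha' ha'b.le i) (pow_le_pow_left₀ ha (by linarith) _)
        (pow_nonneg ha _) (pow_nonneg (by linarith) _)
    · simpa using pow_lt_pow_left₀ ha'b ha' (by omega : k - 1 ≠ 0)
  have hgap : a' ^ k - a ^ k < b ^ k - b' ^ k := by
    rw [← geom_sum₂_mul, ← geom_sum₂_mul, show b - b' = a' - a by linarith]
    exact mul_lt_mul_of_pos_right hsums (sub_pos.2 haa')
  linarith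

theorem pow_add_pow_le_pow_add_pow_of_add_eq (ha : 0 ≤ a) (haa' : a < a') (ha'b' : a' ≤ b')
    (hsum : a + b = a' + b') (k : ℕ) : a' ^ k + b' ^ k ≤ a ^ k + b ^ k := by
  rcases lt_or_ge k 2 with hk | hk
  · interval_cases k <;> simp [hsum]
  · exact (pow_add_pow_lt_pow_add_pow_of_add_eq ha haa' ha'b' hsum hk).le

end PowerSums

namespace Polynomial

variable {R : Type*} [CommRing R] [LinearOrder R] [IsStrictOrderedRing R]

theorem coeff_mul_nonneg {p q : R[X]} (hp : ∀ n, 0 ≤ p.coeff n) (hq : ∀ n, 0 ≤ q.coeff n)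
    (n : ℕ) : 0 ≤ (p * q).coeff n := by
  rw [coeff_mul]
  exact sum_nonneg fun x _ => mul_nonneg (hp _) (hq _)

theorem coeff_prod_nonneg {ι : Type*} (s : Finset ι) (f : ι → R[X])
    (hf : ∀ i ∈ s, ∀ n, 0 ≤ (f i).coeff n) (n : ℕ) : 0 ≤ (∏ i ∈ s, f i).coeff n :=
  prod_induction f (fun p => ∀ n, 0 ≤ p.coeff n) (fun _ _ => coeff_mul_nonneg)
    (fun n => by rw [coeff_one]; split_ifs <;> norm_num) hf n

theorem coeff_X_add_C_nonneg {c : R} (hc : 0 ≤ c) (n : ℕ) : 0 ≤ (X + C c).coeff n := by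
  rw [coeff_add, coeff_X, coeff_C]
  split_ifs <;> linarith

theorem eval_add_eval_lt_eval_add_eval_of_add_eq {P : R[X]} (hP : ∀ n, 0 ≤ P.coeff n)
    (hdeg : 2 ≤ P.natDegree) {a a' b b' : R} (ha : 0 ≤ a) (haa' : a < a') (ha'b' : a' ≤ b')
    (hsum : a + b = a' + b') : P.eval a' + P.eval b' < P.eval a + P.eval b := by
  have hlead : 0 < P.leadingCoeff :=
    (hP _).lt_of_ne' (leadingCoeff_ne_zero.2 (ne_zero_of_natDegree_gt hdeg))
  simp only [eval_eq_sum_range, ← sum_add_distrib, ← mul_add]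
  refine sum_lt_sum (fun k _ => ?_) ⟨P.natDegree, self_mem_range_succ _, ?_⟩
  · exact mul_le_mul_of_nonneg_left
      (pow_add_pow_le_pow_add_pow_of_add_eq ha haa' ha'b' hsum k) (hP k)
  · exact mul_lt_mul_of_pos_left
      (pow_add_pow_lt_pow_add_pow_of_add_eq ha haa' ha'b' hsum hdeg) hlead

end Polynomial

theorem hilbert_function_convexity (N : ℕ) (hN : 5 ≤ N)
    (hQ : ℤ → ℚ)
    (hdef : ∀ m : ℤ, hQ m =
      ((∏ j ∈ Finset.range (N - 3), ((m : ℚ) + j + 1)) / (N - 2).factorial) *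
        (2 * m + N - 2))
    (s t m : ℤ) (hs : 0 < s) (hst : s < t) (htm : 2 * t ≤ m) :
    hQ t + hQ (m - t) < hQ s + hQ (m - s) := by
  have hN2 : (2 : ℚ) ≤ N := by exact_mod_cast (by omega : 2 ≤ N)
  -- `2 * m + N - 2 = 2 * (m + (N - 2) / 2)`, so `P` is `2` times a product of monic linear factors.
  set P : ℚ[X] :=
    C 2 * ((∏ j ∈ range (N - 3), (X + C ((j : ℚ) + 1))) * (X + C (((N : ℚ) - 2) / 2)))
  have hP_coeff : ∀ n, 0 ≤ P.coeff n := fun n => by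
    rw [coeff_C_mul]
    exact mul_nonneg zero_le_two (coeff_mul_nonneg (coeff_prod_nonneg _ _ fun j _ =>
      coeff_X_add_C_nonneg (by positivity)) (coeff_X_add_C_nonneg (by linarith)) n)
  have hP_deg : P.natDegree = N - 2 := by
    rw [natDegree_C_mul two_ne_zero, Monic.natDegree_mul (monic_prod_of_monic _ _ fun j _ =>
      monic_X_add_C _) (monic_X_add_C _), natDegree_prod_of_monic _ _ fun j _ => monic_X_add_C _]
    simp only [natDegree_X_add_C, sum_const, card_range, smul_eq_mul, mul_one]
    omega
  have hQ_eval : ∀ x : ℤ, hQ x = P.eval (x : ℚ) / (N - 2).factorial := fun x => by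
    simp only [hdef, P, eval_mul, eval_C, eval_prod, eval_add, eval_X, ← add_assoc]
    field_simp
    ring
  simp only [hQ_eval, ← add_div]
  gcongr ?_ / _
  have htm' : (2 * t : ℚ) ≤ m := by exact_mod_cast htm
  push_cast
  exact eval_add_eval_lt_eval_add_eval_of_add_eq hP_coeff (by omega) (by exact_mod_cast hs.le)
    (by exact_mod_cast hst) (by linarith) (by ring)
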